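/- Let k ∈ ℕ, let M, M' ∈ 𝔽₂^{k×k} be skew-symmetric, and let w, w' ∈ 𝔽₂^k. Define u_{M,w}(x) := 2^{−k/2}·(−1)^{Q_M(x)+wᵀx} and u_{M',w'}(x) := 2^{−k/2}·(−1)^{Q_{M'}(x)+w'ᵀx} in ℝ^{𝔽₂^k}. Then ⟨u_{M,w}, u_{M',w'}⟩² = 2^{−k}·∑_{p ∈ ker(M+M')} (−1)^{Q_M(p)+Q_{M'}(p)+(w+w')ᵀp}, where ker(M+M') := {p ∈ 𝔽₂^k : (M+M')p = 0}. -/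

import Mathlib

open Matrix

/-- The quadratic form `Q_M(x) = xᵀ M̃ x` where `M̃` is the strictly upper-triangular
part of `M`. -/
def Qform (k : ℕ) (M : Matrix (Fin k) (Fin k) (ZMod 2)) (x : Fin k → ZMod 2) : ZMod 2 :=
  x ⬝ᵥ (Matrix.of fun i j : Fin k => if (i : ℕ) < (j : ℕ) then M i j else 0).mulVec x

/-- The vector `u_{M,w} ∈ ℝ^{𝔽₂^k}` with `u_{M,w}(x) = 2^{−k/2}·(−1)^{Q_M(x)+wᵀx}`. -/
noncomputable def kerdockVec (k : ℕ) (M : Matrix (Fin k) (Fin k) (ZMod 2))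
    (w : Fin k → ZMod 2) (x : Fin k → ZMod 2) : ℝ :=
  ((Real.sqrt 2)⁻¹) ^ k * (-1 : ℝ) ^ (Qform k M x + w ⬝ᵥ x).val

/-!
Put `F(x) = Q_M(x) + wᵀx + Q_{M'}(x) + w'ᵀx`, so that the inner product is `2^{-k} ∑ₓ (-1)^{F(x)}`.
Since `M̃ + M̃ᵀ = M` for skew-symmetric `M`, `F` is a quadratic function with polarization
`F(x + p) = F(x) + F(p) + xᵀ(M + M')p`. Squaring the character sum and substituting `y = x + p`
gives `∑ₚ (-1)^{F(p)} ∑ₓ (-1)^{xᵀ(M + M')p}`, and the inner sum is `2^k` on `ker(M + M')` and `0`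
off it.
-/

open Finset

def signChar : AddChar (ZMod 2) ℝ where
  toFun a := (-1) ^ a.val
  map_zero_eq_one' := rfl
  map_add_eq_mul' a b := by rw [ZMod.val_add, ← neg_one_pow_eq_pow_mod_two, pow_add]

lemma signChar_apply (a : ZMod 2) : signChar a = (-1) ^ a.val := rfl

lemma signChar_one : signChar 1 = -1 := by simp [signChar_apply, ZMod.val_one]

lemma signChar_mul_self (a : ZMod 2) : signChar a * signChar a = 1 := by
  rw [← AddChar.map_add_eq_mul, CharTwo.add_self_eq_zero, AddChar.map_zero_eq_one]

section
variable {n : Type*} [Fintype n] [DecidableEq n]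

lemma sum_signChar_dotProduct (c : n → ZMod 2) :
    ∑ x : n → ZMod 2, signChar (x ⬝ᵥ c) = if c = 0 then 2 ^ Fintype.card n else 0 := by
  split_ifs with hc
  · simp [hc]
  obtain ⟨i, hi⟩ := Function.ne_iff.mp hc
  have hci : c i = 1 := (by decide : ∀ a : ZMod 2, a ≠ 0 → a = 1) _ hi
  -- translating by `eᵢ` flips every sign, since `eᵢ ⬝ᵥ c = 1`
  have hflip : ∑ x : n → ZMod 2, signChar (x ⬝ᵥ c) = -∑ x : n → ZMod 2, signChar (x ⬝ᵥ c) :=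
    calc _ = ∑ x : n → ZMod 2, signChar ((x + Pi.single i 1) ⬝ᵥ c) :=
          (Fintype.sum_equiv (Equiv.addRight (Pi.single i 1)) _ _ fun _ => rfl).symm
      _ = _ := by
          simp [add_dotProduct, hci, AddChar.map_add_eq_mul, signChar_one, sum_neg_distrib]
  linarith

lemma sq_sum_signChar_of_polarization (F : (n → ZMod 2) → ZMod 2) (B : Matrix n n (ZMod 2))
    (hF : ∀ x p, F (x + p) = F x + F p + x ⬝ᵥ B *ᵥ p) :
    (∑ x, signChar (F x)) ^ 2
      = 2 ^ Fintype.card n * ∑ p ∈ univ.filter (fun p => B *ᵥ p = 0), signChar (F p) := by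
  have hrow : ∀ x, ∑ y, signChar (F x) * signChar (F y)
      = ∑ p, signChar (F p) * signChar (x ⬝ᵥ B *ᵥ p) := fun x => by
    rw [← Fintype.sum_equiv (Equiv.addLeft x) _ _ (fun _ => rfl)]
    refine Fintype.sum_congr _ _ fun p => ?_
    simp only [Equiv.coe_addLeft, hF, AddChar.map_add_eq_mul]
    linear_combination (signChar (F p) * signChar (x ⬝ᵥ B *ᵥ p)) * signChar_mul_self (F x)
  calc (∑ x, signChar (F x)) ^ 2
      = ∑ p, signChar (F p) * ∑ x, signChar (x ⬝ᵥ B *ᵥ p) := by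
        rw [sq, sum_mul_sum]
        simp only [hrow, mul_sum]
        exact sum_comm
    _ = _ := by
        simp only [sum_signChar_dotProduct, mul_ite, mul_zero, sum_filter, mul_sum]
        exact sum_congr rfl fun p _ => by split_ifs <;> ring
end

def strictUpperPart {R : Type*} [Zero R] {k : ℕ} (M : Matrix (Fin k) (Fin k) R) :
    Matrix (Fin k) (Fin k) R :=
  of fun i j => if (i : ℕ) < (j : ℕ) then M i j else 0

lemma strictUpperPart_add_transpose {R : Type*} [AddMonoid R] {k : ℕ}
    {M : Matrix (Fin k) (Fin k) R} (hdiag : ∀ i, M i i = 0) (hsym : ∀ i j, M i j = M j i) :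
    strictUpperPart M + (strictUpperPart M)ᵀ = M := by
  ext i j
  simp only [strictUpperPart, Matrix.add_apply, transpose_apply, of_apply, Fin.val_fin_lt]
  rcases lt_trichotomy i j with h | rfl | h
  · simp [h, h.not_gt]
  · simp [hdiag]
  · simp [h, h.not_gt, hsym i j]

lemma Qform_eq_dotProduct_strictUpperPart (k : ℕ) (M : Matrix (Fin k) (Fin k) (ZMod 2))
    (x : Fin k → ZMod 2) : Qform k M x = x ⬝ᵥ strictUpperPart M *ᵥ x := rfl

lemma Qform_add {k : ℕ} {M : Matrix (Fin k) (Fin k) (ZMod 2)}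
    (hdiag : ∀ i, M i i = 0) (hsym : ∀ i j, M i j = M j i) (x p : Fin k → ZMod 2) :
    Qform k M (x + p) = Qform k M x + Qform k M p + x ⬝ᵥ M *ᵥ p := by
  have hcross : p ⬝ᵥ strictUpperPart M *ᵥ x = x ⬝ᵥ (strictUpperPart M)ᵀ *ᵥ p := by
    rw [dotProduct_mulVec, ← mulVec_transpose, dotProduct_comm]
  have hpolar : x ⬝ᵥ M *ᵥ p
      = x ⬝ᵥ strictUpperPart M *ᵥ p + x ⬝ᵥ (strictUpperPart M)ᵀ *ᵥ p := by
    rw [← dotProduct_add, ← add_mulVec, strictUpperPart_add_transpose hdiag hsym]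
  simp only [Qform_eq_dotProduct_strictUpperPart, hpolar, ← hcross, mulVec_add, dotProduct_add,
    add_dotProduct]
  ring

lemma kerdockVec_mul_kerdockVec (k : ℕ) (M M' : Matrix (Fin k) (Fin k) (ZMod 2))
    (w w' x : Fin k → ZMod 2) :
    kerdockVec k M w x * kerdockVec k M' w' x
      = ((2 : ℝ) ^ k)⁻¹ * signChar (Qform k M x + w ⬝ᵥ x + (Qform k M' x + w' ⬝ᵥ x)) := by
  have hsqrt : (Real.sqrt 2)⁻¹ ^ k * (Real.sqrt 2)⁻¹ ^ k = ((2 : ℝ) ^ k)⁻¹ := by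
    rw [← mul_pow, ← mul_inv, Real.mul_self_sqrt zero_le_two, inv_pow]
  rw [AddChar.map_add_eq_mul, ← hsqrt]
  simp only [kerdockVec, signChar_apply]
  ring

/-- For skew-symmetric `M, M' ∈ 𝔽₂^{k×k}` and `w, w' ∈ 𝔽₂^k`,
`⟨u_{M,w}, u_{M',w'}⟩² = 2^{−k}·∑_{p ∈ ker(M+M')} (−1)^{Q_M(p)+Q_{M'}(p)+(w+w')ᵀp}`. -/
theorem stmt_10 (k : ℕ) (M M' : Matrix (Fin k) (Fin k) (ZMod 2))
    (hdiag : ∀ i, M i i = 0) (hsym : ∀ i j, M i j = M j i)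
    (hdiag' : ∀ i, M' i i = 0) (hsym' : ∀ i j, M' i j = M' j i)
    (w w' : Fin k → ZMod 2) :
    (∑ x : Fin k → ZMod 2, kerdockVec k M w x * kerdockVec k M' w' x) ^ 2
      = ((2 : ℝ) ^ k)⁻¹ *
        ∑ p ∈ Finset.univ.filter (fun p : Fin k → ZMod 2 => (M + M').mulVec p = 0),
          (-1 : ℝ) ^ (Qform k M p + Qform k M' p + (w + w') ⬝ᵥ p).val := by
  set F : (Fin k → ZMod 2) → ZMod 2 := fun x => Qform k M x + w ⬝ᵥ x + (Qform k M' x + w' ⬝ᵥ x)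
  have hF : ∀ x p, F (x + p) = F x + F p + x ⬝ᵥ (M + M') *ᵥ p := fun x p => by
    simp only [F, Qform_add hdiag hsym, Qform_add hdiag' hsym', dotProduct_add, add_mulVec]
    ring
  have hFp : ∀ p, F p = Qform k M p + Qform k M' p + (w + w') ⬝ᵥ p := fun p => by
    simp only [F, add_dotProduct]
    ring
  calc _ = ((2 : ℝ) ^ k)⁻¹ ^ 2 * (∑ x, signChar (F x)) ^ 2 := by
        simp only [kerdockVec_mul_kerdockVec, ← mul_sum, mul_pow, F]
    _ = ((2 : ℝ) ^ k)⁻¹ ^ 2 * (2 ^ k * ∑ p ∈ univ.filter (fun p => (M + M') *ᵥ p = 0),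
          signChar (F p)) := by
        rw [sq_sum_signChar_of_polarization F _ hF, Fintype.card_fin]
    _ = _ := by
        simp only [hFp, signChar_apply]
        field_simp
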